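/- arXiv:math/9802027 — 5 statements merged into one kernel-verified Lean document; each statement's English description precedes it below -/
import Mathlib

section
/- If at a point of U one has F⁵ = 0, A ≠ 0 and B ≠ 0, then G/(3·B) = −H/(3·A) at that point; i.e. the two formulas (4.3) for the pseudoscalar field N of weight 2 agree in the cases of intermediate degeneration. -/
noncomputable section

open Real

/-- Partial derivative in the first argument (`f_{1.0}`). -/
def pdx (f : ℝ → ℝ → ℝ) : ℝ → ℝ → ℝ := fun x y => deriv (fun t => f t y) x

/-- Partial derivative in the second argument (`f_{0.1}`). -/
def pdy (f : ℝ → ℝ → ℝ) : ℝ → ℝ → ℝ := fun x y => deriv (fun t => f x t) y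

/-- Indexed partial derivative: `0 ↦ ∂/∂x`, `1 ↦ ∂/∂y`. -/
def pd (i : Fin 2) (f : ℝ → ℝ → ℝ) : ℝ → ℝ → ℝ := if i = 0 then pdx f else pdy f

/-- Smoothness of a two-variable real function on a set `U ⊆ ℝ²`. -/
def Smooth2 (U : Set (ℝ × ℝ)) (f : ℝ → ℝ → ℝ) : Prop :=
  ContDiffOn ℝ (⊤ : ℕ∞) (Function.uncurry f) U

/-- The quantity `A` of formula (1.6). -/
def coefA (P Q R S : ℝ → ℝ → ℝ) : ℝ → ℝ → ℝ := fun x y =>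
  pdy (pdy P) x y - 2 * pdx (pdy Q) x y + pdx (pdx R) x y
    + 2 * P x y * pdx S x y + S x y * pdx P x y
    - 3 * P x y * pdy R x y - 3 * R x y * pdy P x y
    - 3 * Q x y * pdx R x y + 6 * Q x y * pdy Q x y

/-- The quantity `B` of formula (1.6). -/
def coefB (P Q R S : ℝ → ℝ → ℝ) : ℝ → ℝ → ℝ := fun x y =>
  pdx (pdx S) x y - 2 * pdx (pdy R) x y + pdy (pdy Q) x y
    - 2 * S x y * pdy P x y - P x y * pdy S x y
    + 3 * S x y * pdx Q x y + 3 * Q x y * pdx S x y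
    + 3 * R x y * pdy Q x y - 6 * R x y * pdx R x y

/-- The quantity `G` of formula (2.4). -/
def coefG (P Q R S : ℝ → ℝ → ℝ) : ℝ → ℝ → ℝ := fun x y =>
  -(coefB P Q R S x y) * pdx (coefB P Q R S) x y
    - 3 * coefA P Q R S x y * pdy (coefB P Q R S) x y
    + 4 * coefB P Q R S x y * pdy (coefA P Q R S) x y
    + 3 * S x y * (coefA P Q R S x y)^2
    - 6 * R x y * coefA P Q R S x y * coefB P Q R S x y
    + 3 * Q x y * (coefB P Q R S x y)^2

/-- The quantity `H` of formula (2.4). -/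
def coefH (P Q R S : ℝ → ℝ → ℝ) : ℝ → ℝ → ℝ := fun x y =>
  -(coefA P Q R S x y) * pdy (coefA P Q R S) x y
    - 3 * coefB P Q R S x y * pdx (coefA P Q R S) x y
    + 4 * coefA P Q R S x y * pdx (coefB P Q R S) x y
    - 3 * P x y * (coefB P Q R S x y)^2
    + 6 * Q x y * coefA P Q R S x y * coefB P Q R S x y
    - 3 * R x y * (coefA P Q R S x y)^2

/-- The quantity `F⁵` of formula (2.2). -/
def coefF5 (P Q R S : ℝ → ℝ → ℝ) : ℝ → ℝ → ℝ := fun x y =>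
  coefA P Q R S x y * coefB P Q R S x y * pdy (coefA P Q R S) x y
    + coefA P Q R S x y * coefB P Q R S x y * pdx (coefB P Q R S) x y
    - (coefA P Q R S x y)^2 * pdy (coefB P Q R S) x y
    - (coefB P Q R S x y)^2 * pdx (coefA P Q R S) x y
    - P x y * (coefB P Q R S x y)^3
    + 3 * Q x y * coefA P Q R S x y * (coefB P Q R S x y)^2
    - 3 * R x y * (coefA P Q R S x y)^2 * coefB P Q R S x y
    + S x y * (coefA P Q R S x y)^3

theorem coefA_mul_coefG_add_coefB_mul_coefH (P Q R S : ℝ → ℝ → ℝ) (x y : ℝ) :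
    coefA P Q R S x y * coefG P Q R S x y + coefB P Q R S x y * coefH P Q R S x y
      = 3 * coefF5 P Q R S x y := by
  simp only [coefG, coefH, coefF5]
  ring

theorem N_formulas_agree_general
    (U : Set (ℝ × ℝ))
    (P Q R S : ℝ → ℝ → ℝ) :
    ∀ x y : ℝ, (x, y) ∈ U →
      coefF5 P Q R S x y = 0 →
      coefA P Q R S x y ≠ 0 →
      coefB P Q R S x y ≠ 0 →
      coefG P Q R S x y / (3 * coefB P Q R S x y)
        = -(coefH P Q R S x y / (3 * coefA P Q R S x y)) := by
  intro x y _ hF hA hB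
  have key := coefA_mul_coefG_add_coefB_mul_coefH P Q R S x y
  rw [hF, mul_zero] at key
  field_simp
  linear_combination key

/-- The two formulas (4.3) for the pseudoscalar field `N` agree where `F⁵ = 0`,
`A ≠ 0` and `B ≠ 0`. -/
theorem N_formulas_agree
    (U : Set (ℝ × ℝ)) (hU : IsOpen U) (hUconn : IsConnected U)
    (P Q R S : ℝ → ℝ → ℝ)
    (hP : Smooth2 U P) (hQ : Smooth2 U Q) (hR : Smooth2 U R) (hS : Smooth2 U S) :
    ∀ x y : ℝ, (x, y) ∈ U →
      coefF5 P Q R S x y = 0 →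
      coefA P Q R S x y ≠ 0 →
      coefB P Q R S x y ≠ 0 →
      coefG P Q R S x y / (3 * coefB P Q R S x y)
        = -(coefH P Q R S x y / (3 * coefA P Q R S x y)) :=
  N_formulas_agree_general U P Q R S
end
end

section
/- At every point of U where F⁵ = 0, A ≠ 0 and B ≠ 0, the two effective formulas (4.8) and (4.14) for the parameters φ₁, φ₂ agree: −3·A·(A·S − B_{0.1})/(5·B²) − 3·(A_{0.1} + B_{1.0} − 3·A·R)/(5·B) − (6/5)·Q = −3·(B·P + A_{1.0})/(5·A) + (3/5)·Q, and 3·(A·S − B_{0.1})/(5·B) − (3/5)·R = 3·B·(B·P + A_{1.0})/(5·A²) − 3·(B_{1.0} + A_{0.1} + 3·B·Q)/(5·A) + (6/5)·R. -/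
noncomputable section

open Real

def phi₁Formula48 (P Q R S : ℝ → ℝ → ℝ) (x y : ℝ) : ℝ :=
  -3 * coefA P Q R S x y * (coefA P Q R S x y * S x y - pdy (coefB P Q R S) x y)
      / (5 * (coefB P Q R S x y)^2)
    - 3 * (pdy (coefA P Q R S) x y + pdx (coefB P Q R S) x y
        - 3 * coefA P Q R S x y * R x y) / (5 * coefB P Q R S x y)
    - (6/5) * Q x y

def phi₁Formula414 (P Q R S : ℝ → ℝ → ℝ) (x y : ℝ) : ℝ :=
  -3 * (coefB P Q R S x y * P x y + pdx (coefA P Q R S) x y) / (5 * coefA P Q R S x y)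
    + (3/5) * Q x y

def phi₂Formula48 (P Q R S : ℝ → ℝ → ℝ) (x y : ℝ) : ℝ :=
  3 * (coefA P Q R S x y * S x y - pdy (coefB P Q R S) x y) / (5 * coefB P Q R S x y)
    - (3/5) * R x y

def phi₂Formula414 (P Q R S : ℝ → ℝ → ℝ) (x y : ℝ) : ℝ :=
  3 * coefB P Q R S x y * (coefB P Q R S x y * P x y + pdx (coefA P Q R S) x y)
      / (5 * (coefA P Q R S x y)^2)
    - 3 * (pdx (coefB P Q R S) x y + pdy (coefA P Q R S) x y
        + 3 * coefB P Q R S x y * Q x y) / (5 * coefA P Q R S x y)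
    + (6/5) * R x y

section

variable (P Q R S : ℝ → ℝ → ℝ) {x y : ℝ}

theorem phi₁Formula48_sub_phi₁Formula414 (hA : coefA P Q R S x y ≠ 0)
    (hB : coefB P Q R S x y ≠ 0) :
    phi₁Formula48 P Q R S x y - phi₁Formula414 P Q R S x y =
      -3 * coefF5 P Q R S x y / (5 * coefA P Q R S x y * (coefB P Q R S x y)^2) := by
  unfold phi₁Formula48 phi₁Formula414 coefF5
  field_simp
  ring

theorem phi₂Formula48_sub_phi₂Formula414 (hA : coefA P Q R S x y ≠ 0)
    (hB : coefB P Q R S x y ≠ 0) :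
    phi₂Formula48 P Q R S x y - phi₂Formula414 P Q R S x y =
      3 * coefF5 P Q R S x y / (5 * (coefA P Q R S x y)^2 * coefB P Q R S x y) := by
  unfold phi₂Formula48 phi₂Formula414 coefF5
  field_simp
  ring

end

theorem phi_formulas_agree_general
    (U : Set (ℝ × ℝ))
    (P Q R S : ℝ → ℝ → ℝ) :
    ∀ x y : ℝ, (x, y) ∈ U →
      coefF5 P Q R S x y = 0 →
      coefA P Q R S x y ≠ 0 →
      coefB P Q R S x y ≠ 0 →
      (-3 * coefA P Q R S x y *
          (coefA P Q R S x y * S x y - pdy (coefB P Q R S) x y)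
          / (5 * (coefB P Q R S x y)^2)
        - 3 * (pdy (coefA P Q R S) x y + pdx (coefB P Q R S) x y
            - 3 * coefA P Q R S x y * R x y) / (5 * coefB P Q R S x y)
        - (6/5) * Q x y
        = -3 * (coefB P Q R S x y * P x y + pdx (coefA P Q R S) x y)
            / (5 * coefA P Q R S x y)
          + (3/5) * Q x y) ∧
      (3 * (coefA P Q R S x y * S x y - pdy (coefB P Q R S) x y)
            / (5 * coefB P Q R S x y)
        - (3/5) * R x y
        = 3 * coefB P Q R S x y *
            (coefB P Q R S x y * P x y + pdx (coefA P Q R S) x y)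
            / (5 * (coefA P Q R S x y)^2)
          - 3 * (pdx (coefB P Q R S) x y + pdy (coefA P Q R S) x y
              + 3 * coefB P Q R S x y * Q x y) / (5 * coefA P Q R S x y)
          + (6/5) * R x y) := by
  intro x y _ hF hA hB
  have h₁ : phi₁Formula48 P Q R S x y - phi₁Formula414 P Q R S x y = 0 := by
    rw [phi₁Formula48_sub_phi₁Formula414 P Q R S hA hB, hF, mul_zero, zero_div]
  have h₂ : phi₂Formula48 P Q R S x y - phi₂Formula414 P Q R S x y = 0 := by
    rw [phi₂Formula48_sub_phi₂Formula414 P Q R S hA hB, hF, mul_zero, zero_div]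
  exact ⟨sub_eq_zero.mp h₁, sub_eq_zero.mp h₂⟩

/-- The effective formulas (4.8) and (4.14) for `φ₁`, `φ₂` agree where `F⁵ = 0`,
`A ≠ 0` and `B ≠ 0`. -/
theorem phi_formulas_agree
    (U : Set (ℝ × ℝ)) (hU : IsOpen U) (hUconn : IsConnected U)
    (P Q R S : ℝ → ℝ → ℝ)
    (hP : Smooth2 U P) (hQ : Smooth2 U Q) (hR : Smooth2 U R) (hS : Smooth2 U S) :
    ∀ x y : ℝ, (x, y) ∈ U →
      coefF5 P Q R S x y = 0 →
      coefA P Q R S x y ≠ 0 →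
      coefB P Q R S x y ≠ 0 →
      (-3 * coefA P Q R S x y *
          (coefA P Q R S x y * S x y - pdy (coefB P Q R S) x y)
          / (5 * (coefB P Q R S x y)^2)
        - 3 * (pdy (coefA P Q R S) x y + pdx (coefB P Q R S) x y
            - 3 * coefA P Q R S x y * R x y) / (5 * coefB P Q R S x y)
        - (6/5) * Q x y
        = -3 * (coefB P Q R S x y * P x y + pdx (coefA P Q R S) x y)
            / (5 * coefA P Q R S x y)
          + (3/5) * Q x y) ∧
      (3 * (coefA P Q R S x y * S x y - pdy (coefB P Q R S) x y)
            / (5 * coefB P Q R S x y)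
        - (3/5) * R x y
        = 3 * coefB P Q R S x y *
            (coefB P Q R S x y * P x y + pdx (coefA P Q R S) x y)
            / (5 * (coefA P Q R S x y)^2)
          - 3 * (pdx (coefB P Q R S) x y + pdy (coefA P Q R S) x y
              + 3 * coefB P Q R S x y * Q x y) / (5 * coefA P Q R S x y)
          + (6/5) * R x y) :=
  phi_formulas_agree_general U P Q R S
end
end

section
/- (Upper-triangularity of the curvature in special coordinates, formulas (7.3), (7.4) and (7.8)) Assume the special-coordinate conditions of intermediate degeneration with M = 0: P = 0 on U, the expressions A and B satisfy A = 0 and B = 1 identically on U, and Q_{1.0} = (12/5)·Q² on U. Then the curvature matrix R^k_q satisfies: R²₁ = 0; R¹₁ = −(3/5)·Λ; R²₂ = (3/5)·Ω + (3/5)·Λ; and R¹₂ = S_{1.0} − (6/5)·R_{0.1} + (12/5)·S·Q − (54/25)·R², where Ω = R_{1.0} − 2·Q_{0.1} and Λ = −2·R_{1.0} + 3·Q_{0.1} + (6/5)·Q·R. -/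
noncomputable section

open Real

/-- The fully covariant symbol `θ_{ijk}` of (2.7) built from the ODE coefficients. -/
def thetaLow (P Q R S : ℝ → ℝ → ℝ) (i j k : Fin 2) : ℝ → ℝ → ℝ :=
  match i.1 + j.1 + k.1 with
  | 0 => P
  | 1 => Q
  | 2 => R
  | _ => S

/-- The symbol `θ^k_{ij}` of (2.8), obtained by raising the first index with `d^{kr}`. -/
def thetaUp (P Q R S : ℝ → ℝ → ℝ) (k i j : Fin 2) : ℝ → ℝ → ℝ :=
  if k = 0 then thetaLow P Q R S 1 i j
  else fun x y => -(thetaLow P Q R S 0 i j x y)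

/-- The affine connection `Γ^k_{ij} = θ^k_{ij} − (φ_i δ^k_j + φ_j δ^k_i)/3` of (3.3)/(4.22). -/
def gamConn (P Q R S phi1 phi2 : ℝ → ℝ → ℝ) (k i j : Fin 2) : ℝ → ℝ → ℝ := fun x y =>
  thetaUp P Q R S k i j x y -
    ((if i = 0 then phi1 x y else phi2 x y) * (if k = j then (1:ℝ) else 0)
      + (if j = 0 then phi1 x y else phi2 x y) * (if k = i then (1:ℝ) else 0)) / 3

/-- Covariant derivative `(∇_V W)^k = Σ_i V^i (∂W^k/∂x^i + Σ_s Γ^k_{is} W^s)`. -/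
def covD (Gam : Fin 2 → Fin 2 → Fin 2 → ℝ → ℝ → ℝ) (V W : Fin 2 → ℝ → ℝ → ℝ)
    (k : Fin 2) : ℝ → ℝ → ℝ := fun x y =>
  ∑ i : Fin 2, V i x y * (pd i (W k) x y + ∑ s : Fin 2, Gam k i s x y * W s x y)

/-- The matrix `R^k_q` obtained from the curvature tensor (7.1) via (7.2):
`R^k_q = R^k_{q,12}`. -/
def curvR (Gam : Fin 2 → Fin 2 → Fin 2 → ℝ → ℝ → ℝ) (k q : Fin 2) : ℝ → ℝ → ℝ :=
  fun x y =>
    pdx (Gam k 1 q) x y - pdy (Gam k 0 q) x y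
      + ∑ s : Fin 2, (Gam k 0 s x y * Gam s 1 q x y - Gam k 1 s x y * Gam s 0 q x y)

/-- Upper-triangularity of the curvature matrix in special coordinates, together
with formulas (7.4) for its eigenvalues and (7.8) for `R¹₂`. -/
theorem curvature_special_coordinates
    (U : Set (ℝ × ℝ)) (hU : IsOpen U) (hUconn : IsConnected U)
    (P Q R S : ℝ → ℝ → ℝ)
    (hP : Smooth2 U P) (hQ : Smooth2 U Q) (hR : Smooth2 U R) (hS : Smooth2 U S)
    (hPzero : ∀ x y : ℝ, (x, y) ∈ U → P x y = 0)
    (hA : ∀ x y : ℝ, (x, y) ∈ U → coefA P Q R S x y = 0)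
    (hB : ∀ x y : ℝ, (x, y) ∈ U → coefB P Q R S x y = 1)
    (hM : ∀ x y : ℝ, (x, y) ∈ U → pdx Q x y = (12/5) * (Q x y)^2) :
    ∀ x y : ℝ, (x, y) ∈ U →
      curvR (gamConn P Q R S (fun x y => -(6/5) * Q x y) (fun x y => -(3/5) * R x y))
          1 0 x y = 0 ∧
      curvR (gamConn P Q R S (fun x y => -(6/5) * Q x y) (fun x y => -(3/5) * R x y))
          0 0 x y
        = -(3/5) * (-2 * pdx R x y + 3 * pdy Q x y + (6/5) * Q x y * R x y) ∧
      curvR (gamConn P Q R S (fun x y => -(6/5) * Q x y) (fun x y => -(3/5) * R x y))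
          1 1 x y
        = (3/5) * (pdx R x y - 2 * pdy Q x y)
          + (3/5) * (-2 * pdx R x y + 3 * pdy Q x y + (6/5) * Q x y * R x y) ∧
      curvR (gamConn P Q R S (fun x y => -(6/5) * Q x y) (fun x y => -(3/5) * R x y))
          0 1 x y
        = pdx S x y - (6/5) * pdy R x y + (12/5) * S x y * Q x y
          - (54/25) * (R x y)^2 := by

  intro x y hxy
  have hP0 : P x y = 0 := hPzero x y hxy
  have hQx : pdx Q x y = (12/5) * (Q x y)^2 := hM x y hxy
  have hPx : pdx P x y = 0 := by
    have hcont : Continuous (fun t : ℝ => (t, y)) := by continuity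
    have hmem : {t : ℝ | (t, y) ∈ U} ∈ nhds x := (hU.preimage hcont).mem_nhds hxy
    have hev : (fun t => P t y) =ᶠ[nhds x] fun _ => (0:ℝ) := by
      filter_upwards [hmem] with t ht using hPzero t y ht
    simp [pdx, hev.deriv_eq]
  have hPy : pdy P x y = 0 := by
    have hcont : Continuous (fun t : ℝ => (x, t)) := by continuity
    have hmem : {t : ℝ | (x, t) ∈ U} ∈ nhds y := (hU.preimage hcont).mem_nhds hxy
    have hev : (fun t => P x t) =ᶠ[nhds y] fun _ => (0:ℝ) := by
      filter_upwards [hmem] with t ht using hPzero x t ht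
    simp [pdy, hev.deriv_eq]
  set G := gamConn P Q R S (fun x y => -(6/5) * Q x y) (fun x y => -(3/5) * R x y) with hGdef
  have g000 : G 0 0 0 = fun a b => (9/5) * Q a b := by
    funext a b; simp [hGdef, gamConn, thetaUp, thetaLow]; ring
  have g001 : G 0 0 1 = fun a b => (6/5) * R a b := by
    funext a b; simp [hGdef, gamConn, thetaUp, thetaLow]; ring
  have g010 : G 0 1 0 = fun a b => (6/5) * R a b := by
    funext a b; simp [hGdef, gamConn, thetaUp, thetaLow]; ring
  have g011 : G 0 1 1 = fun a b => S a b := by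
    funext a b; simp [hGdef, gamConn, thetaUp, thetaLow]
  have g100 : G 1 0 0 = fun a b => -(P a b) := by
    funext a b; simp [hGdef, gamConn, thetaUp, thetaLow]
  have g101 : G 1 0 1 = fun a b => -(3/5) * Q a b := by
    funext a b; simp [hGdef, gamConn, thetaUp, thetaLow]; ring
  have g110 : G 1 1 0 = fun a b => -(3/5) * Q a b := by
    funext a b; simp [hGdef, gamConn, thetaUp, thetaLow]; ring
  have g111 : G 1 1 1 = fun a b => -(3/5) * R a b := by
    funext a b; simp [hGdef, gamConn, thetaUp, thetaLow]; ring
  have pdx_cm : ∀ (c : ℝ) (f : ℝ → ℝ → ℝ) (a b : ℝ),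
      pdx (fun u v => c * f u v) a b = c * pdx f a b := by
    intro c f a b; simp [pdx, deriv_const_mul_field]
  have pdy_cm : ∀ (c : ℝ) (f : ℝ → ℝ → ℝ) (a b : ℝ),
      pdy (fun u v => c * f u v) a b = c * pdy f a b := by
    intro c f a b; simp [pdy, deriv_const_mul_field]
  have pdx_neg : ∀ (f : ℝ → ℝ → ℝ) (a b : ℝ),
      pdx (fun u v => -(f u v)) a b = -(pdx f a b) := by
    intro f a b; simp [pdx]
  have pdy_neg : ∀ (f : ℝ → ℝ → ℝ) (a b : ℝ),
      pdy (fun u v => -(f u v)) a b = -(pdy f a b) := by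
    intro f a b; simp [pdy]
  have pdx_eta : ∀ (f : ℝ → ℝ → ℝ) (a b : ℝ), pdx (fun u v => f u v) a b = pdx f a b := by
    intro f a b; rfl
  refine ⟨?_, ?_, ?_, ?_⟩
  · show curvR G 1 0 x y = 0
    simp only [curvR, Fin.sum_univ_two, g000, g001, g010, g011, g100, g101, g110, g111,
      pdx_cm, pdy_cm, pdx_neg, pdy_neg]
    rw [hPy, hQx, hP0]; ring
  · show curvR G 0 0 x y = _
    simp only [curvR, Fin.sum_univ_two, g000, g001, g010, g011, g100, g101, g110, g111,
      pdx_cm, pdy_cm, pdx_neg, pdy_neg]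
    rw [hP0]; ring
  · show curvR G 1 1 x y = _
    simp only [curvR, Fin.sum_univ_two, g000, g001, g010, g011, g100, g101, g110, g111,
      pdx_cm, pdy_cm, pdx_neg, pdy_neg]
    rw [hP0]; ring
  · show curvR G 0 1 x y = _
    simp only [curvR, Fin.sum_univ_two, g000, g001, g010, g011, g100, g101, g110, g111,
      pdx_cm, pdy_cm, pdx_neg, pdy_neg, pdx_eta]
    ring
end
end

section
/- (Evaluation of the basic invariant in the second case of intermediate degeneration, formulas (6.13)–(6.15)) Let r, s, σ : ℝ → ℝ be smooth and let U = {(x,y) ∈ ℝ² : x > 0}. Define on U the canonical coefficients P = 0, Q = −5/(12·x), R = r(y) + x^{−1/4}, S = σ(y)·x^{5/4} − 4·s(y)·x + (4/3)·x² − 12·r(y)·x^{3/4} − 4·x^{1/2}. Define N = Q, Ω = R_{1.0} − 2·Q_{0.1} and Λ = −2·R_{1.0} + 3·Q_{0.1} + (6/5)·Q·R. Then on U: Ω = −x^{−5/4}/4, Λ = −r(y)/(2·x), and the scalar invariant I₁ = Λ¹²/(Ω⁸·N²) equals (2304/25)·r(y)¹². In particular, I₁ is constant on U if and only if r is constant.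 -/
noncomputable section

open Real

/-!
Since `Q` does not depend on `y`, `Ω` and `Λ` only involve `R_{1.0} = -x^{-5/4}/4`; in `Λ` the
identity `x^{-1/4} = x · x^{-5/4}` cancels every term except `-r(y)/(2x)`, and the powers of `x`
then cancel in `I₁`, leaving `(2304/25) r(y)¹²`. So `I₁` is constant iff `r¹²` is, and a continuous
function with constant even power on a connected space is constant by the intermediate value theorem.
-/

theorem eq_of_forall_pow_eq_pow {X R : Type*} [TopologicalSpace X] [PreconnectedSpace X]
    [Ring R] [LinearOrder R] [IsStrictOrderedRing R] [TopologicalSpace R]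
    [OrderClosedTopology R] {f : X → R} (hf : Continuous f) {n : ℕ} (hn : n ≠ 0)
    (h : ∀ a b, f a ^ n = f b ^ n) (a b : X) : f a = f b := by
  by_contra hne
  have hneg : f a = -f b := ((pow_eq_pow_iff_of_ne_zero hn).1 (h a b)).resolve_left hne |>.1
  -- `f` changes sign between `a` and `b`, so it vanishes somewhere, and then everywhere.
  obtain ⟨c, hc⟩ : ∃ c, f c = 0 := by
    rcases le_total (f b) 0 with hb | hb
    · exact intermediate_value_univ b a hf ⟨hb, by rw [hneg]; exact neg_nonneg.2 hb⟩
    · exact intermediate_value_univ a b hf ⟨by rw [hneg]; exact neg_nonpos.2 hb, hb⟩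
  have hb : f b = 0 := pow_eq_zero_iff hn |>.1 (by rw [← h c b, hc, zero_pow hn])
  exact hne (by rw [hneg, hb, neg_zero])

theorem pdx_add_rpow (g : ℝ → ℝ) (p : ℝ) {x : ℝ} (hx : x ≠ 0) (y : ℝ) :
    pdx (fun x y => g y + x ^ p) x y = p * x ^ (p - 1) :=
  ((hasDerivAt_rpow_const (Or.inl hx)).const_add (g y)).deriv

theorem pdy_eq_zero_of_const_snd (f : ℝ → ℝ) : pdy (fun x _ => f x) = 0 := by
  ext x y
  exact deriv_const y (f x)

theorem rpow_neg_five_div_four_mul_self {x : ℝ} (hx : 0 < x) :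
    x ^ (-(5:ℝ)/4) * x = x ^ (-(1:ℝ)/4) := by
  rw [← rpow_add_one hx.ne']
  norm_num

theorem rpow_neg_five_div_four_pow_eight {x : ℝ} (hx : 0 < x) :
    (x ^ (-(5:ℝ)/4)) ^ 8 = (x ^ 10)⁻¹ := by
  rw [← rpow_mul_natCast hx.le, ← rpow_natCast, ← rpow_neg hx.le]
  norm_num

theorem second_case_invariant_I1_general
    (r s σ : ℝ → ℝ)
    (hr : ContDiff ℝ (⊤ : ℕ∞) r) :
    let U : Set (ℝ × ℝ) := {p | 0 < p.1}
    let P : ℝ → ℝ → ℝ := fun _ _ => 0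
    let Q : ℝ → ℝ → ℝ := fun x _ => -5 / (12 * x)
    let R : ℝ → ℝ → ℝ := fun x y => r y + x ^ (-(1:ℝ)/4)
    let S : ℝ → ℝ → ℝ := fun x y =>
      σ y * x ^ ((5:ℝ)/4) - 4 * s y * x + (4/3) * x^2
        - 12 * r y * x ^ ((3:ℝ)/4) - 4 * x ^ ((1:ℝ)/2)
    let N : ℝ → ℝ → ℝ := Q
    let Ω : ℝ → ℝ → ℝ := fun x y => pdx R x y - 2 * pdy Q x y
    let Λ : ℝ → ℝ → ℝ := fun x y =>
      -2 * pdx R x y + 3 * pdy Q x y + (6/5) * Q x y * R x y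
    let I1 : ℝ → ℝ → ℝ := fun x y => (Λ x y)^12 / ((Ω x y)^8 * (N x y)^2)
    (∀ x y : ℝ, (x, y) ∈ U →
        Ω x y = -(x ^ (-(5:ℝ)/4)) / 4 ∧
        Λ x y = -(r y) / (2 * x) ∧
        I1 x y = (2304/25) * (r y)^12) ∧
    ((∀ p ∈ U, ∀ q ∈ U, I1 p.1 p.2 = I1 q.1 q.2) ↔ ∀ a b : ℝ, r a = r b) := by
  intro U _ Q R _ N Ω Λ I1
  have hΩ (x y : ℝ) (hx : 0 < x) : Ω x y = -(x ^ (-(5:ℝ)/4)) / 4 := by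
    simp only [Ω, R, Q, pdx_add_rpow r _ hx.ne', pdy_eq_zero_of_const_snd]
    norm_num
    ring
  have hΛ (x y : ℝ) (hx : 0 < x) : Λ x y = -(r y) / (2 * x) := by
    simp only [Λ, R, Q, pdx_add_rpow r _ hx.ne', pdy_eq_zero_of_const_snd]
    rw [← rpow_neg_five_div_four_mul_self hx]
    norm_num
    field_simp
    ring
  have hI1 (x y : ℝ) (hx : 0 < x) : I1 x y = 2304 / 25 * r y ^ 12 := by
    have hΩ8 : Ω x y ^ 8 = (x ^ 10)⁻¹ / 4 ^ 8 := by
      rw [hΩ x y hx, neg_div, Even.neg_pow (by decide), div_pow,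
        rpow_neg_five_div_four_pow_eight hx]
    simp only [I1, N, Q, hΛ x y hx, hΩ8]
    field_simp
    ring
  refine ⟨fun x y hx => ⟨hΩ x y hx, hΛ x y hx, hI1 x y hx⟩, fun h => ?_, fun h p hp q hq => ?_⟩
  · refine eq_of_forall_pow_eq_pow hr.continuous (n := 12) (by norm_num) fun a b => ?_
    have hU (c : ℝ) : ((1 : ℝ), c) ∈ U := show (0 : ℝ) < 1 from one_pos
    have := h _ (hU a) _ (hU b)
    rw [hI1 1 a one_pos, hI1 1 b one_pos] at this
    linarith
  · rw [hI1 _ _ hp, hI1 _ _ hq, h p.2 q.2]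

/-- Evaluation of the basic invariant `I₁ = Λ¹²/(Ω⁸·N²)` in the second case of
intermediate degeneration (formulas (6.13)–(6.15)). -/
theorem second_case_invariant_I1
    (r s σ : ℝ → ℝ)
    (hr : ContDiff ℝ (⊤ : ℕ∞) r) (hs : ContDiff ℝ (⊤ : ℕ∞) s)
    (hσ : ContDiff ℝ (⊤ : ℕ∞) σ) :
    let U : Set (ℝ × ℝ) := {p | 0 < p.1}
    let P : ℝ → ℝ → ℝ := fun _ _ => 0
    let Q : ℝ → ℝ → ℝ := fun x _ => -5 / (12 * x)
    let R : ℝ → ℝ → ℝ := fun x y => r y + x ^ (-(1:ℝ)/4)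
    let S : ℝ → ℝ → ℝ := fun x y =>
      σ y * x ^ ((5:ℝ)/4) - 4 * s y * x + (4/3) * x^2
        - 12 * r y * x ^ ((3:ℝ)/4) - 4 * x ^ ((1:ℝ)/2)
    let N : ℝ → ℝ → ℝ := Q
    let Ω : ℝ → ℝ → ℝ := fun x y => pdx R x y - 2 * pdy Q x y
    let Λ : ℝ → ℝ → ℝ := fun x y =>
      -2 * pdx R x y + 3 * pdy Q x y + (6/5) * Q x y * R x y
    let I1 : ℝ → ℝ → ℝ := fun x y => (Λ x y)^12 / ((Ω x y)^8 * (N x y)^2)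
    (∀ x y : ℝ, (x, y) ∈ U →
        Ω x y = -(x ^ (-(5:ℝ)/4)) / 4 ∧
        Λ x y = -(r y) / (2 * x) ∧
        I1 x y = (2304/25) * (r y)^12) ∧
    ((∀ p ∈ U, ∀ q ∈ U, I1 p.1 p.2 = I1 q.1 q.2) ↔ ∀ a b : ℝ, r a = r b) :=
  second_case_invariant_I1_general r s σ hr
end
end

section
/- (Evaluation of the invariant I₁ in the fourth case of intermediate degeneration, formulas (10.19)–(10.24)) Let σ : ℝ → ℝ be smooth with σ(y) ≠ 0 for all y, and let U = {(x,y) ∈ ℝ² : x > 0}. Define on U the canonical coefficients P = 0, Q = −5/(12·x), R = 0, S = σ(y)·x^{5/4} + (4/3)·x². Set N = Q, Θ = S_{1.0} − (6/5)·R_{0.1} + (12/5)·S·Q − (54/25)·R², and Γ¹₂₂ = (9/25)·Θ_{0.1}·Q·R·Θ + (12/5)·Q·Θ_{0.1}² − 3·Θ_{0.1}·R − (54/125)·R²·Θ²·Q − (54/25)·R²·Θ − (9/5)·Q·Θ·Θ_{0.2} − (54/25)·Q·Θ²·R_{0.1} − Θ_{0.2} − (6/5)·R_{0.1}·Θ +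 (81/25)·S·Q²·Θ² + (18/5)·S·Q·Θ + S. Define E = Γ¹₂₂ + (27·N/5)·(Θ + 5/(9·N))³ − (3/4)·(Θ + 5/(9·N))² and I₁ = E⁶/(N⁸·(Θ + 5/(9·N))²⁰). Then on U: I₁ = (6879707136/390625)·(3·σ''(y)·σ(y) − 4·σ'(y)²)⁶/σ(y)²⁰. -/
noncomputable section

open Real

/-!
Substitute `x = a ^ 4` with `a > 0`. Then `S = σ a⁵ + (4/3) a⁸` and `Θ = (a/4) σ + (4/3) a⁴`,
so `Θ + 5/(9N) = (a/4) σ` and the `y`-derivatives of `Θ` are `(a/4) σ'` and `(a/4) σ''`.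
Substituting into `Γ¹₂₂` gives `E = (3 σ'' σ - 4 σ'²) / (64 a²)`, and in `I₁` all powers of `a` cancel.
-/

lemma pow_four_rpow_div_four {a : ℝ} (ha : 0 ≤ a) (r : ℝ) : (a ^ 4) ^ (r / 4) = a ^ r := by
  rw [← Real.rpow_natCast_mul ha]
  norm_num [mul_div_cancel₀]

lemma exists_pos_pow_four_eq {x : ℝ} (hx : 0 < x) : ∃ a : ℝ, 0 < a ∧ x = a ^ 4 := by
  refine ⟨x ^ (1 / 4 : ℝ), by positivity, ?_⟩
  rw [← Real.rpow_natCast, ← Real.rpow_mul hx.le]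
  norm_num

lemma hasDerivAt_rpow_five_div_four_at_pow_four {a : ℝ} (ha : 0 < a) (c : ℝ) :
    HasDerivAt (fun s : ℝ => c * s ^ ((5 : ℝ) / 4) + 4 / 3 * s ^ 2)
      (5 / 4 * c * a + 8 / 3 * a ^ 4) (a ^ 4) := by
  refine (((Real.hasDerivAt_rpow_const (Or.inl (pow_pos ha 4).ne')).const_mul c).add
    ((hasDerivAt_pow 2 (a ^ 4)).const_mul (4 / 3 : ℝ))).congr_deriv ?_
  rw [show (5 : ℝ) / 4 - 1 = 1 / 4 by norm_num, pow_four_rpow_div_four ha.le]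
  norm_num
  ring

lemma fourth_case_I1_normal_form {a : ℝ} (ha : a ≠ 0) (s w : ℝ) :
    (w / (64 * a ^ 2)) ^ 6 / ((-5 / (12 * a ^ 4)) ^ 8 * (a / 4 * s) ^ 20)
      = 6879707136 / 390625 * w ^ 6 / s ^ 20 := by
  rw [mul_pow, ← mul_assoc, ← div_div]
  congr 1
  field_simp
  ring

theorem fourth_case_invariant_I1_general
    (σ : ℝ → ℝ) :
    let U : Set (ℝ × ℝ) := {p | 0 < p.1}
    let P : ℝ → ℝ → ℝ := fun _ _ => 0
    let Q : ℝ → ℝ → ℝ := fun x _ => -5 / (12 * x)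
    let R : ℝ → ℝ → ℝ := fun _ _ => 0
    let S : ℝ → ℝ → ℝ := fun x y => σ y * x ^ ((5:ℝ)/4) + (4/3) * x^2
    let N : ℝ → ℝ → ℝ := Q
    let Θ : ℝ → ℝ → ℝ := fun x y =>
      pdx S x y - (6/5) * pdy R x y + (12/5) * S x y * Q x y - (54/25) * (R x y)^2
    let Γ : ℝ → ℝ → ℝ := fun x y =>
      (9/25) * pdy Θ x y * Q x y * R x y * Θ x y
        + (12/5) * Q x y * (pdy Θ x y)^2
        - 3 * pdy Θ x y * R x y
        - (54/125) * (R x y)^2 * (Θ x y)^2 * Q x y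
        - (54/25) * (R x y)^2 * Θ x y
        - (9/5) * Q x y * Θ x y * pdy (pdy Θ) x y
        - (54/25) * Q x y * (Θ x y)^2 * pdy R x y
        - pdy (pdy Θ) x y
        - (6/5) * pdy R x y * Θ x y
        + (81/25) * S x y * (Q x y)^2 * (Θ x y)^2
        + (18/5) * S x y * Q x y * Θ x y
        + S x y
    let E : ℝ → ℝ → ℝ := fun x y =>
      Γ x y + (27 * N x y / 5) * (Θ x y + 5 / (9 * N x y))^3
        - (3/4) * (Θ x y + 5 / (9 * N x y))^2
    let I1 : ℝ → ℝ → ℝ := fun x y =>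
      (E x y)^6 / ((N x y)^8 * (Θ x y + 5 / (9 * N x y))^20)
    ∀ x y : ℝ, (x, y) ∈ U →
      I1 x y = (6879707136/390625) *
        (3 * deriv (deriv σ) y * σ y - 4 * (deriv σ y)^2)^6 / (σ y)^20 := by
  intro U _ Q R S N Θ Γ E I1 x y hx
  obtain ⟨a, ha, rfl⟩ := exists_pos_pow_four_eq (show 0 < x from hx)
  have hR : ∀ t, pdy R (a ^ 4) t = 0 := fun t => by simp [pdy, R]
  have hS : ∀ t, S (a ^ 4) t = σ t * a ^ 5 + 4 / 3 * a ^ 8 := fun t => by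
    simp only [S, pow_four_rpow_div_four ha.le]
    norm_num
    ring
  have hΘ : (fun t => Θ (a ^ 4) t) = fun t => a / 4 * σ t + 4 / 3 * a ^ 4 := by
    funext t
    simp only [Θ, hR, hS, Q, R, pdx, S, (hasDerivAt_rpow_five_div_four_at_pow_four ha (σ t)).deriv]
    field_simp
    ring
  have hΘ' : (fun t => pdy Θ (a ^ 4) t) = fun t => a / 4 * deriv σ t := by
    funext t
    rw [pdy, hΘ, deriv_add_const, deriv_const_mul_field']
  have hΘ'' : pdy (pdy Θ) (a ^ 4) y = a / 4 * deriv (deriv σ) y := by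
    rw [pdy, hΘ', deriv_const_mul_field']
  have hT : Θ (a ^ 4) y + 5 / (9 * N (a ^ 4) y) = a / 4 * σ y := by
    simp only [congrFun hΘ y, N, Q]
    field_simp
    ring
  have hE : E (a ^ 4) y = (3 * deriv (deriv σ) y * σ y - 4 * deriv σ y ^ 2) / (64 * a ^ 2) := by
    simp only [E, Γ, hR, hS, hΘ'', congrFun hΘ y, congrFun hΘ' y, N, Q, R]
    field_simp
    ring
  simp only [I1, hE, hT, N, Q]
  exact fourth_case_I1_normal_form ha.ne' _ _

/-- Evaluation of the invariant `I₁` in the fourth case of intermediate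
degeneration (formulas (10.19)–(10.24)). -/
theorem fourth_case_invariant_I1
    (σ : ℝ → ℝ) (hσ : ContDiff ℝ (⊤ : ℕ∞) σ) (hσne : ∀ y : ℝ, σ y ≠ 0) :
    let U : Set (ℝ × ℝ) := {p | 0 < p.1}
    let P : ℝ → ℝ → ℝ := fun _ _ => 0
    let Q : ℝ → ℝ → ℝ := fun x _ => -5 / (12 * x)
    let R : ℝ → ℝ → ℝ := fun _ _ => 0
    let S : ℝ → ℝ → ℝ := fun x y => σ y * x ^ ((5:ℝ)/4) + (4/3) * x^2
    let N : ℝ → ℝ → ℝ := Q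
    let Θ : ℝ → ℝ → ℝ := fun x y =>
      pdx S x y - (6/5) * pdy R x y + (12/5) * S x y * Q x y - (54/25) * (R x y)^2
    let Γ : ℝ → ℝ → ℝ := fun x y =>
      (9/25) * pdy Θ x y * Q x y * R x y * Θ x y
        + (12/5) * Q x y * (pdy Θ x y)^2
        - 3 * pdy Θ x y * R x y
        - (54/125) * (R x y)^2 * (Θ x y)^2 * Q x y
        - (54/25) * (R x y)^2 * Θ x y
        - (9/5) * Q x y * Θ x y * pdy (pdy Θ) x y
        - (54/25) * Q x y * (Θ x y)^2 * pdy R x y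
        - pdy (pdy Θ) x y
        - (6/5) * pdy R x y * Θ x y
        + (81/25) * S x y * (Q x y)^2 * (Θ x y)^2
        + (18/5) * S x y * Q x y * Θ x y
        + S x y
    let E : ℝ → ℝ → ℝ := fun x y =>
      Γ x y + (27 * N x y / 5) * (Θ x y + 5 / (9 * N x y))^3
        - (3/4) * (Θ x y + 5 / (9 * N x y))^2
    let I1 : ℝ → ℝ → ℝ := fun x y =>
      (E x y)^6 / ((N x y)^8 * (Θ x y + 5 / (9 * N x y))^20)
    ∀ x y : ℝ, (x, y) ∈ U →
      I1 x y = (6879707136/390625) *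
        (3 * deriv (deriv σ) y * σ y - 4 * (deriv σ y)^2)^6 / (σ y)^20 :=
  fourth_case_invariant_I1_general σ
end
end
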